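/- arXiv:1103.0208 — 3 statements merged into one kernel-verified Lean document; each statement's English description precedes it below -/
import Mathlib

section
/- Let W₁, W₂ be independent nonnegative random variables, each with tail P(W > x) ≤ c x^{-(τ-1)} for all x > 0, where τ > 1 and c > 0. Then there exists a constant C > 0 such that for all u ≥ 1, P(W₁W₂ > u) ≤ C (1 + log u) u^{-(τ-1)}. -/
open MeasureTheory ProbabilityTheory Real

theorem stmt_2 {Ω : Type*} [MeasureSpace Ω] [IsProbabilityMeasure (ℙ : Measure Ω)]
    (W₁ W₂ : Ω → ℝ) (hm1 : Measurable W₁) (hm2 : Measurable W₂)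
    (hnn1 : ∀ ω, 0 ≤ W₁ ω) (hnn2 : ∀ ω, 0 ≤ W₂ ω)
    (hind : IndepFun W₁ W₂ ℙ) (hid : IdentDistrib W₁ W₂ ℙ ℙ)
    (τ c : ℝ) (hτ : 1 < τ) (hc : 0 < c)
    (htail : ∀ x : ℝ, 0 < x → ℙ {ω | x < W₁ ω} ≤ ENNReal.ofReal (c * x ^ (-(τ - 1)))) :
    ∃ C > (0 : ℝ), ∀ u : ℝ, 1 ≤ u →
      ℙ {ω | u < W₁ ω * W₂ ω} ≤ ENNReal.ofReal (C * (1 + Real.log u) * u ^ (-(τ - 1))) := by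
  set α := τ - 1 with hαdef
  have hα0 : 0 < α := by simp only [hαdef]; linarith
  have htail2 : ∀ x : ℝ, 0 < x → ℙ {ω | x < W₂ ω} ≤ ENNReal.ofReal (c * x ^ (-α)) := by
    intro x hx
    have heq : ℙ {ω | x < W₂ ω} = ℙ {ω | x < W₁ ω} := by
      have h := hid.measure_mem_eq (s := Set.Ioi x) measurableSet_Ioi
      simpa [Set.preimage, Set.mem_Ioi] using h.symm
    rw [heq]; exact htail x hx
  refine ⟨2 * c + 2 * c ^ 2 * (4 : ℝ) ^ α, by positivity, ?_⟩
  intro u hu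
  have hu0 : (0 : ℝ) < u := by linarith
  set K := ⌈Real.logb 2 u⌉₊ with hKdef
  -- the dyadic cover
  have hsub : {ω | u < W₁ ω * W₂ ω} ⊆
      ({ω | u < W₁ ω} ∪ {ω | u < W₂ ω}) ∪
      ⋃ k ∈ Finset.range (K + 1),
        ({ω | (2 : ℝ) ^ k ≤ W₂ ω} ∩ {ω | u / 2 ^ (k + 1) < W₁ ω}) := by
    intro ω hω
    simp only [Set.mem_setOf_eq] at hω
    by_cases h1 : W₂ ω ≤ 1
    · left; left
      have : W₁ ω * W₂ ω ≤ W₁ ω := by nlinarith [hnn1 ω]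
      exact Set.mem_setOf_eq ▸ lt_of_lt_of_le hω this
    push_neg at h1
    by_cases h2 : u < W₂ ω
    · left; right; exact h2
    push_neg at h2
    right
    set k := ⌊Real.logb 2 (W₂ ω)⌋₊ with hkdef
    have hW2pos : (0 : ℝ) < W₂ ω := by linarith
    have hlb : 0 ≤ Real.logb 2 (W₂ ω) := Real.logb_nonneg one_lt_two h1.le
    have hklow : (2 : ℝ) ^ k ≤ W₂ ω := by
      calc (2 : ℝ) ^ k = (2 : ℝ) ^ ((k : ℝ)) := by rw [Real.rpow_natCast]
        _ ≤ (2 : ℝ) ^ Real.logb 2 (W₂ ω) :=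
            Real.rpow_le_rpow_of_exponent_le one_le_two (Nat.floor_le hlb)
        _ = W₂ ω := Real.rpow_logb two_pos (by norm_num) hW2pos
    have hkhigh : W₂ ω < 2 ^ (k + 1) := by
      calc W₂ ω = (2 : ℝ) ^ Real.logb 2 (W₂ ω) :=
            (Real.rpow_logb two_pos (by norm_num) hW2pos).symm
        _ < (2 : ℝ) ^ ((k + 1 : ℕ) : ℝ) := by
            apply Real.rpow_lt_rpow_of_exponent_lt one_lt_two
            push_cast
            exact Nat.lt_floor_add_one _
        _ = 2 ^ (k + 1) := by rw [Real.rpow_natCast]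
    have hkK : k ∈ Finset.range (K + 1) := by
      have h3 : Real.logb 2 (W₂ ω) ≤ Real.logb 2 u :=
        Real.logb_le_logb_of_le one_lt_two hW2pos h2
      have : k ≤ K := le_trans (Nat.floor_le_floor h3) (Nat.floor_le_ceil _)
      simpa [Finset.mem_range, Nat.lt_succ_iff] using this
    refine Set.mem_biUnion hkK ⟨hklow, ?_⟩
    have hW1pos : 0 < W₁ ω := by
      rcases (hnn1 ω).lt_or_eq with h | h
      · exact h
      · exfalso; nlinarith
    have hpow : (0 : ℝ) < 2 ^ (k + 1) := by positivity
    have : u < W₁ ω * 2 ^ (k + 1) := by nlinarith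
    exact Set.mem_setOf_eq ▸ (div_lt_iff₀ hpow).mpr this
  -- bound on each dyadic piece
  have hCk : ∀ k, ℙ ({ω | (2 : ℝ) ^ k ≤ W₂ ω} ∩ {ω | u / 2 ^ (k + 1) < W₁ ω})
      ≤ ENNReal.ofReal (c ^ 2 * (4 : ℝ) ^ α * u ^ (-α)) := by
    intro k
    have t2pos : (0 : ℝ) < (2 : ℝ) ^ k := by positivity
    have hpow : (0 : ℝ) < 2 ^ (k + 1) := by positivity
    have hmul : ℙ ({ω | (2 : ℝ) ^ k ≤ W₂ ω} ∩ {ω | u / 2 ^ (k + 1) < W₁ ω})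
        = ℙ {ω | u / 2 ^ (k + 1) < W₁ ω} * ℙ {ω | (2 : ℝ) ^ k ≤ W₂ ω} := by
      have h := hind.measure_inter_preimage_eq_mul (Set.Ioi (u / 2 ^ (k + 1)))
        (Set.Ici ((2 : ℝ) ^ k)) measurableSet_Ioi measurableSet_Ici
      rw [Set.inter_comm]
      simpa [Set.preimage, Set.mem_Ioi, Set.mem_Ici] using h
    rw [hmul]
    have hb1 : ℙ {ω | u / 2 ^ (k + 1) < W₁ ω}
        ≤ ENNReal.ofReal (c * (u / 2 ^ (k + 1)) ^ (-α)) := htail _ (by positivity)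
    have hb2 : ℙ {ω | (2 : ℝ) ^ k ≤ W₂ ω}
        ≤ ENNReal.ofReal (c * ((2 : ℝ) ^ k / 2) ^ (-α)) := by
      refine le_trans (measure_mono ?_) (htail2 ((2 : ℝ) ^ k / 2) (by positivity))
      intro ω hω
      simp only [Set.mem_setOf_eq] at hω ⊢
      linarith [half_lt_self t2pos]
    calc ℙ {ω | u / 2 ^ (k + 1) < W₁ ω} * ℙ {ω | (2 : ℝ) ^ k ≤ W₂ ω}
        ≤ ENNReal.ofReal (c * (u / 2 ^ (k + 1)) ^ (-α)) *
          ENNReal.ofReal (c * ((2 : ℝ) ^ k / 2) ^ (-α)) := mul_le_mul' hb1 hb2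
      _ = ENNReal.ofReal ((c * (u / 2 ^ (k + 1)) ^ (-α)) *
          (c * ((2 : ℝ) ^ k / 2) ^ (-α))) := (ENNReal.ofReal_mul (by positivity)).symm
      _ = ENNReal.ofReal (c ^ 2 * (4 : ℝ) ^ α * u ^ (-α)) := by
          congr 1
          have h1 : (u / 2 ^ (k + 1)) ^ (-α) * ((2 : ℝ) ^ k / 2) ^ (-α)
              = ((u / 2 ^ (k + 1)) * ((2 : ℝ) ^ k / 2)) ^ (-α) :=
            (Real.mul_rpow (by positivity) (by positivity)).symm
          have h2 : (u / 2 ^ (k + 1)) * ((2 : ℝ) ^ k / 2) = u / 4 := by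
            rw [pow_succ]
            field_simp
            ring
          have h3 : (u / 4 : ℝ) ^ (-α) = u ^ (-α) * (4 : ℝ) ^ α := by
            rw [Real.div_rpow hu0.le (by norm_num : (0:ℝ) ≤ 4),
              Real.rpow_neg (by norm_num : (0:ℝ) ≤ 4)]
            field_simp
          calc c * (u / 2 ^ (k + 1)) ^ (-α) * (c * ((2 : ℝ) ^ k / 2) ^ (-α))
              = c ^ 2 * ((u / 2 ^ (k + 1)) ^ (-α) * ((2 : ℝ) ^ k / 2) ^ (-α)) := by ring
            _ = c ^ 2 * ((u / 4 : ℝ) ^ (-α)) := by rw [h1, h2]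
            _ = c ^ 2 * (4 : ℝ) ^ α * u ^ (-α) := by rw [h3]; ring
  -- putting it together
  have hKbound : (K : ℝ) + 1 ≤ 2 * (1 + Real.log u) := by
    have hlogu : 0 ≤ Real.log u := Real.log_nonneg hu
    have hlogb : Real.logb 2 u ≤ 2 * Real.log u := by
      rw [Real.logb, div_le_iff₀ (Real.log_pos one_lt_two)]
      nlinarith [Real.log_two_gt_d9]
    have hceil : (K : ℝ) < Real.logb 2 u + 1 :=
      Nat.ceil_lt_add_one (Real.logb_nonneg one_lt_two hu)
    linarith
  calc ℙ {ω | u < W₁ ω * W₂ ω}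
      ≤ ℙ (({ω | u < W₁ ω} ∪ {ω | u < W₂ ω}) ∪
        ⋃ k ∈ Finset.range (K + 1),
          ({ω | (2 : ℝ) ^ k ≤ W₂ ω} ∩ {ω | u / 2 ^ (k + 1) < W₁ ω})) := measure_mono hsub
    _ ≤ (ℙ {ω | u < W₁ ω} + ℙ {ω | u < W₂ ω}) +
        ∑ k ∈ Finset.range (K + 1),
          ℙ ({ω | (2 : ℝ) ^ k ≤ W₂ ω} ∩ {ω | u / 2 ^ (k + 1) < W₁ ω}) := by
        refine le_trans (measure_union_le _ _) (add_le_add (measure_union_le _ _) ?_)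
        exact measure_biUnion_finset_le _ _
    _ ≤ (ENNReal.ofReal (c * u ^ (-α)) + ENNReal.ofReal (c * u ^ (-α))) +
        ∑ k ∈ Finset.range (K + 1),
          ENNReal.ofReal (c ^ 2 * (4 : ℝ) ^ α * u ^ (-α)) := by
        refine add_le_add (add_le_add (htail u hu0) (htail2 u hu0)) ?_
        exact Finset.sum_le_sum fun k _ => hCk k
    _ = ENNReal.ofReal (c * u ^ (-α)) + ENNReal.ofReal (c * u ^ (-α)) +
        (K + 1 : ℕ) * ENNReal.ofReal (c ^ 2 * (4 : ℝ) ^ α * u ^ (-α)) := by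
        rw [Finset.sum_const, Finset.card_range, nsmul_eq_mul]
    _ ≤ ENNReal.ofReal ((2 * c + 2 * c ^ 2 * (4 : ℝ) ^ α) * (1 + Real.log u) * u ^ (-α)) := by
        rw [← ENNReal.ofReal_natCast (K + 1), ← ENNReal.ofReal_mul (by positivity),
          ← ENNReal.ofReal_add (by positivity) (by positivity),
          ← ENNReal.ofReal_add (by positivity) (by positivity)]
        apply ENNReal.ofReal_le_ofReal
        have hP : (0 : ℝ) < u ^ (-α) := Real.rpow_pos_of_pos hu0 _
        have hQ : (0 : ℝ) < c ^ 2 * (4 : ℝ) ^ α := by positivity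
        have hL : 0 ≤ Real.log u := Real.log_nonneg hu
        push_cast
        have e1 : 2 * c * u ^ (-α) ≤ 2 * c * (1 + Real.log u) * u ^ (-α) := by nlinarith [mul_nonneg (mul_nonneg hc.le hL) hP.le]
        have e2 : ((K : ℝ) + 1) * (c ^ 2 * (4 : ℝ) ^ α * u ^ (-α))
            ≤ 2 * (1 + Real.log u) * (c ^ 2 * (4 : ℝ) ^ α * u ^ (-α)) :=
          mul_le_mul_of_nonneg_right hKbound (by positivity)
        nlinarith [e1, e2]
end

section
/- Consider scale-free percolation on ℤ^d with i.i.d. weights (W_x) and edge probabilities p_{xy} = 1 - exp(-λ W_x W_y / |x-y|^α), where λ > 0 and α ≤ d. If the weight distribution satisfies P(W > 0) > 0 and E[W] > 0 (possibly infinite), then conditionally on W₀ = w for any w > 0, the degree D₀ of the origin is infinite almost surely. -/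
open MeasureTheory ProbabilityTheory Real

/-- Euclidean norm on the lattice `ℤ^d`. -/
noncomputable def znorm (d : ℕ) (x : Fin d → ℤ) : ℝ :=
  Real.sqrt (∑ i, ((x i : ℝ)) ^ 2)

/-- A pair of finite sets of ordered pairs of vertices represents a valid collection of
(distinct) edges: no loops, no repetitions (also up to swapping), and disjointness. -/
def OkPairs {V : Type*} [DecidableEq V] (S T : Finset (V × V)) : Prop :=
  (∀ p ∈ S ∪ T, p.1 ≠ p.2) ∧ (∀ p ∈ S ∪ T, p.swap ∉ S ∪ T) ∧ Disjoint S T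

/-!
Fix a finite set `F` of sites. For every finite `T` avoiding `F ∪ {0}`, the event that the origin
has no neighbour outside `F ∪ {0}` lies in the event that it has no neighbour in `T`, of probability
`E ∏_{y ∈ T} exp (-λ w W_y / |y|^α)`. By independence this product of expectations factorises, and
since `P(W > δ) > 0` for some `δ > 0`, each factor is at most `exp (-κ λ w |y|^{-α})` for a fixed
`κ > 0`. For `α ≤ d` the series `∑_{y ≠ 0} |y|^{-α}` diverges (each dyadic box
`(2^k, 2^(k+1)]^d` contributes at least `(2√d)^{-d}`), so the event has probability zero; a
countable union over `F` finishes the proof.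
-/

open Finset Function Filter Topology
open scoped ENNReal

lemma one_le_znorm {d : ℕ} {y : Fin d → ℤ} (hy : y ≠ 0) : 1 ≤ znorm d y := by
  obtain ⟨i, hi⟩ := Function.ne_iff.mp hy
  have hyi : (1 : ℝ) ≤ (y i : ℝ) ^ 2 := by
    exact_mod_cast Int.one_le_abs hi |>.trans (Int.le_self_sq _) |>.trans_eq (sq_abs _)
  rw [znorm, Real.one_le_sqrt]
  exact hyi.trans (single_le_sum (f := fun j => (y j : ℝ) ^ 2) (fun j _ => sq_nonneg _)
    (mem_univ i))

lemma znorm_neg {d : ℕ} (y : Fin d → ℤ) : znorm d (-y) = znorm d y := by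
  simp [znorm]

lemma znorm_le_of_forall_abs_le {d : ℕ} {y : Fin d → ℤ} {m : ℝ} (hm : 0 ≤ m)
    (h : ∀ i, |(y i : ℝ)| ≤ m) : znorm d y ≤ √d * m := by
  rw [znorm, ← Real.sqrt_sq hm, ← Real.sqrt_mul (Nat.cast_nonneg d)]
  refine Real.sqrt_le_sqrt ?_
  calc ∑ i, (y i : ℝ) ^ 2 ≤ ∑ _i : Fin d, m ^ 2 :=
        sum_le_sum fun i _ => sq_le_sq' (abs_le.mp (h i)).1 (abs_le.mp (h i)).2
    _ = d * m ^ 2 := by simp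

noncomputable def dyadicBox (d k : ℕ) : Finset (Fin d → ℤ) :=
  Fintype.piFinset fun _ => Ioc (2 ^ k) (2 ^ (k + 1))

lemma mem_dyadicBox {d k : ℕ} {y : Fin d → ℤ} :
    y ∈ dyadicBox d k ↔ ∀ i, 2 ^ k < y i ∧ y i ≤ 2 ^ (k + 1) := by
  simp [dyadicBox]

lemma card_dyadicBox (d k : ℕ) : #(dyadicBox d k) = (2 ^ k) ^ d := by
  have : ((2 : ℤ) ^ (k + 1) - 2 ^ k).toNat = 2 ^ k := by
    rw [pow_succ, mul_two, add_sub_cancel_right]; exact_mod_cast Int.toNat_natCast (2 ^ k)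
  simp [dyadicBox, Fintype.card_piFinset, this]

lemma pairwise_disjoint_dyadicBox {d : ℕ} (hd : 1 ≤ d) : Pairwise (Disjoint on dyadicBox d) := by
  intro k l hkl
  rw [Function.onFun, disjoint_left]
  intro y hk hl
  obtain ⟨hk₁, hk₂⟩ := mem_dyadicBox.mp hk ⟨0, hd⟩
  obtain ⟨hl₁, hl₂⟩ := mem_dyadicBox.mp hl ⟨0, hd⟩
  rcases hkl.lt_or_gt with h | h
  · have : (2 : ℤ) ^ (k + 1) ≤ 2 ^ l := pow_le_pow_right₀ (by norm_num) h
    omega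
  · have : (2 : ℤ) ^ (l + 1) ≤ 2 ^ k := pow_le_pow_right₀ (by norm_num) h
    omega

lemma ne_zero_of_mem_dyadicBox {d k : ℕ} (hd : 1 ≤ d) {y : Fin d → ℤ} (hy : y ∈ dyadicBox d k) :
    y ≠ 0 := by
  rintro rfl
  have := (mem_dyadicBox.mp hy ⟨0, hd⟩).1
  simp only [Pi.zero_apply] at this
  exact (pow_pos two_pos k).not_gt this

lemma znorm_le_of_mem_dyadicBox {d k : ℕ} {y : Fin d → ℤ} (hy : y ∈ dyadicBox d k) :
    znorm d y ≤ √d * 2 ^ (k + 1) := by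
  refine znorm_le_of_forall_abs_le (by positivity) fun i => ?_
  obtain ⟨h₁, h₂⟩ := mem_dyadicBox.mp hy i
  rw [abs_of_pos (by exact_mod_cast (pow_pos two_pos k).trans h₁)]
  exact_mod_cast h₂

lemma inv_le_sum_dyadicBox {d : ℕ} (hd : 1 ≤ d) (k : ℕ) :
    ((2 * √d) ^ d)⁻¹ ≤ ∑ y ∈ dyadicBox d k, (znorm d y ^ d)⁻¹ := by
  have hterm : ∀ y ∈ dyadicBox d k, ((√d * 2 ^ (k + 1)) ^ d)⁻¹ ≤ (znorm d y ^ d)⁻¹ :=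
    fun y hy => inv_anti₀ (pow_pos (zero_lt_one.trans_le
      (one_le_znorm (ne_zero_of_mem_dyadicBox hd hy))) d)
      (pow_le_pow_left₀ (Real.sqrt_nonneg _) (znorm_le_of_mem_dyadicBox hy) d)
  calc ((2 * √d) ^ d)⁻¹ = #(dyadicBox d k) * ((√d * 2 ^ (k + 1)) ^ d)⁻¹ := by
        rw [card_dyadicBox]; push_cast; field_simp; ring
    _ ≤ _ := by simpa using card_nsmul_le_sum _ _ _ hterm

lemma not_summable_znorm_pow_inv {d : ℕ} (hd : 1 ≤ d) :
    ¬Summable fun y : Fin d → ℤ => (znorm d y ^ d)⁻¹ := by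
  intro hsum
  have hpos : 0 < ((2 * √d) ^ d)⁻¹ := by
    have : 0 < √d := Real.sqrt_pos.mpr (by exact_mod_cast hd)
    positivity
  obtain ⟨K, hK⟩ := exists_nat_gt ((∑' y, (znorm d y ^ d)⁻¹) / ((2 * √d) ^ d)⁻¹)
  rw [div_lt_iff₀ hpos] at hK
  have : K * ((2 * √d) ^ d)⁻¹ ≤ ∑' y, (znorm d y ^ d)⁻¹ :=
    calc K * ((2 * √d) ^ d)⁻¹ ≤ ∑ k ∈ range K, ∑ y ∈ dyadicBox d k, (znorm d y ^ d)⁻¹ := by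
          simpa using sum_le_sum fun k (_ : k ∈ range K) => inv_le_sum_dyadicBox hd k
      _ = ∑ y ∈ (range K).biUnion (dyadicBox d), (znorm d y ^ d)⁻¹ :=
          (sum_biUnion ((pairwise_disjoint_dyadicBox hd).set_pairwise _)).symm
      _ ≤ _ := hsum.sum_le_tsum _ fun y _ => by unfold znorm; positivity
  linarith

lemma not_summable_znorm_rpow_inv {d : ℕ} (hd : 1 ≤ d) {α : ℝ} (hαd : α ≤ d) :
    ¬Summable fun y : Fin d → ℤ => (znorm d y ^ α)⁻¹ := by
  refine fun hsum => not_summable_znorm_pow_inv hd (hsum.of_nonneg_of_le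
    (fun y => by unfold znorm; positivity) fun y => ?_)
  rcases eq_or_ne y 0 with rfl | hy
  · have h0 : znorm d 0 = 0 := by simp [znorm]
    rw [h0, zero_pow (by omega), inv_zero]
    positivity
  · have h1 := one_le_znorm hy
    rw [← Real.rpow_natCast]
    exact inv_anti₀ (by positivity) (Real.rpow_le_rpow_of_exponent_le h1 hαd)

lemma exists_disjoint_le_sum_of_not_summable {ι : Type*} {f : ι → ℝ} (hf : 0 ≤ f)
    (h : ¬Summable f) (F : Finset ι) (M : ℝ) :
    ∃ T : Finset ι, Disjoint T F ∧ M ≤ ∑ i ∈ T, f i := by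
  rw [← F.summable_compl_iff] at h
  by_contra! hT
  refine h (summable_of_sum_le (c := M) (fun i => hf i) fun T => ?_)
  have hdisj : Disjoint (T.map (Embedding.subtype _)) F := disjoint_left.mpr fun i hi => by
    obtain ⟨j, -, rfl⟩ := mem_map.mp hi
    exact j.2
  exact (sum_map T (Embedding.subtype _) f).symm.trans_le (hT _ hdisj).le

lemma Real.mul_exp_neg_le_one_sub_exp_neg {x b : ℝ} (hx : 0 ≤ x) (hxb : x ≤ b) :
    x * exp (-b) ≤ 1 - exp (-x) :=
  calc x * exp (-b) ≤ x * exp (-x) := by gcongr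
    _ ≤ (exp x - 1) * exp (-x) := by gcongr; linarith [add_one_le_exp x]
    _ = 1 - exp (-x) := by rw [sub_mul, ← exp_add]; simp

section Laplace

variable {Ω : Type*} [MeasurableSpace Ω] {μ : Measure Ω}

lemma exists_pos_measure_lt_of_measure_pos {Z : Ω → ℝ} (h : 0 < μ {ω | 0 < Z ω}) :
    ∃ δ > 0, 0 < μ {ω | δ < Z ω} := by
  have hsub : {ω | 0 < Z ω} ⊆ ⋃ n : ℕ, {ω | 1 / (n + 1 : ℝ) < Z ω} := fun ω hω =>
    Set.mem_iUnion.mpr (exists_nat_one_div_lt (K := ℝ) hω)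
  obtain ⟨n, hn⟩ := exists_measure_pos_of_not_measure_iUnion_null fun h0 =>
    h.ne' (measure_mono_null hsub h0)
  exact ⟨_, Nat.one_div_pos_of_nat, hn⟩

lemma ae_infinite_setOf_of_forall_finset {ι : Type*} [Countable ι] {R : ι → Ω → Prop}
    (h : ∀ F : Finset ι, μ {ω | ∀ i ∉ F, ¬R i ω} = 0) :
    ∀ᵐ ω ∂μ, {i | R i ω}.Infinite := by
  rw [ae_iff]
  refine measure_mono_null (fun ω hω => Set.mem_iUnion.mpr
    ⟨(Set.not_infinite.mp hω).toFinset, fun i hi hR => hi ((Set.Finite.mem_toFinset _).mpr hR)⟩)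
    (measure_iUnion_null h)

variable [IsProbabilityMeasure μ]

lemma lintegral_exp_neg_mul_le {Z : Ω → ℝ} (hZ : Measurable Z) (hZnn : ∀ ω, 0 ≤ Z ω)
    {δ c c₀ : ℝ} (hδ : 0 ≤ δ) (hc : 0 ≤ c) (hcc₀ : c ≤ c₀) :
    ∫⁻ ω, ENNReal.ofReal (exp (-(c * Z ω))) ∂μ ≤
      ENNReal.ofReal (exp (-(μ.real {ω | δ < Z ω} * δ * exp (-(c₀ * δ)) * c))) := by
  set A := {ω | δ < Z ω}
  have hA : MeasurableSet A := measurableSet_lt measurable_const hZ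
  set a := μ.real A
  have hon : ∀ ω ∈ A, ENNReal.ofReal (exp (-(c * Z ω))) ≤ ENNReal.ofReal (exp (-(c * δ))) :=
    fun ω hω => ENNReal.ofReal_le_ofReal <| exp_le_exp.mpr <| neg_le_neg <|
      mul_le_mul_of_nonneg_left (le_of_lt hω) hc
  have hoff : ∀ ω ∈ Aᶜ, ENNReal.ofReal (exp (-(c * Z ω))) ≤ 1 := fun ω _ =>
    ENNReal.ofReal_le_one.mpr <| exp_le_one_iff.mpr <| neg_nonpos.mpr <| mul_nonneg hc (hZnn ω)
  have hdecay := mul_exp_neg_le_one_sub_exp_neg (mul_nonneg hc hδ)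
    (mul_le_mul_of_nonneg_right hcc₀ hδ)
  calc ∫⁻ ω, ENNReal.ofReal (exp (-(c * Z ω))) ∂μ
      = ∫⁻ ω in A, ENNReal.ofReal (exp (-(c * Z ω))) ∂μ
          + ∫⁻ ω in Aᶜ, ENNReal.ofReal (exp (-(c * Z ω))) ∂μ := (lintegral_add_compl _ hA).symm
    _ ≤ ∫⁻ _ in A, ENNReal.ofReal (exp (-(c * δ))) ∂μ + ∫⁻ _ in Aᶜ, 1 ∂μ :=
        add_le_add (setLIntegral_mono measurable_const hon)
          (setLIntegral_mono measurable_const hoff)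
    _ = ENNReal.ofReal (exp (-(c * δ)) * a + (1 - a)) := by
        rw [setLIntegral_const, setLIntegral_const, one_mul, ← ofReal_measureReal,
          ← ofReal_measureReal, probReal_compl_eq_one_sub hA, ← ENNReal.ofReal_mul (exp_pos _).le,
          ← ENNReal.ofReal_add (by positivity) (sub_nonneg.mpr measureReal_le_one)]
    _ ≤ _ := ENNReal.ofReal_le_ofReal <| by
        nlinarith [one_sub_le_exp_neg (a * δ * exp (-(c₀ * δ)) * c),
          measureReal_nonneg (μ := μ) (s := A)]

theorem eq_zero_of_le_lintegral_prod_exp_neg {ι : Type*} {W : ι → Ω → ℝ} {Z : Ω → ℝ}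
    {c : ι → ℝ} {s : Set ι} {c₀ : ℝ} {m : ℝ≥0∞} (hW : iIndepFun W μ)
    (hWm : ∀ i, Measurable (W i)) (hWZ : ∀ i ∈ s, IdentDistrib (W i) Z μ μ) (hZ : Measurable Z)
    (hZnn : ∀ ω, 0 ≤ Z ω) (hZpos : 0 < μ {ω | 0 < Z ω}) (hc : ∀ i ∈ s, c i ∈ Set.Icc 0 c₀)
    (hsum : ∀ M : ℝ, ∃ T : Finset ι, ↑T ⊆ s ∧ M ≤ ∑ i ∈ T, c i)
    (hm : ∀ T : Finset ι, ↑T ⊆ s →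
      m ≤ ∫⁻ ω, ∏ i ∈ T, ENNReal.ofReal (exp (-(c i * W i ω))) ∂μ) :
    m = 0 := by
  obtain ⟨δ, hδ, hδZ⟩ := exists_pos_measure_lt_of_measure_pos hZpos
  -- each Laplace factor `E[exp (-c i * Z)]` is at most `exp (-κ * c i)`
  set κ := μ.real {ω | δ < Z ω} * δ * exp (-(c₀ * δ))
  have hκ : 0 < κ := by
    have : 0 < μ.real {ω | δ < Z ω} := ENNReal.toReal_pos hδZ.ne' (measure_ne_top _ _)
    positivity
  have hg : ∀ i, Measurable fun t : ℝ => ENNReal.ofReal (exp (-(c i * t))) := fun i => by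
    fun_prop
  have hbound : ∀ M : ℝ, m ≤ ENNReal.ofReal (exp (-(κ * M))) := fun M => by
    obtain ⟨T, hTs, hM⟩ := hsum M
    calc m ≤ ∫⁻ ω, ∏ i ∈ T, ENNReal.ofReal (exp (-(c i * W i ω))) ∂μ := hm T hTs
      _ = ∏ i ∈ T, ∫⁻ ω, ENNReal.ofReal (exp (-(c i * W i ω))) ∂μ :=
          lintegral_prod_eq_prod_lintegral_of_indepFun T _ (hW.comp _ hg)
            fun i => (hg i).comp (hWm i)
      _ = ∏ i ∈ T, ∫⁻ ω, ENNReal.ofReal (exp (-(c i * Z ω))) ∂μ :=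
          prod_congr rfl fun i hi => ((hWZ i (hTs hi)).comp (hg i)).lintegral_eq
      _ ≤ ∏ i ∈ T, ENNReal.ofReal (exp (-(κ * c i))) :=
          prod_le_prod' fun i hi =>
            lintegral_exp_neg_mul_le hZ hZnn hδ.le (hc i (hTs hi)).1 (hc i (hTs hi)).2
      _ = ENNReal.ofReal (exp (-(κ * ∑ i ∈ T, c i))) := by
          rw [← ENNReal.ofReal_prod_of_nonneg fun i _ => (exp_pos _).le, ← exp_sum, mul_sum,
            sum_neg_distrib]
      _ ≤ ENNReal.ofReal (exp (-(κ * M))) := by gcongr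
  have hlim : Tendsto (fun M : ℝ => ENNReal.ofReal (exp (-(κ * M)))) atTop (𝓝 0) := by
    simpa using ENNReal.tendsto_ofReal
      (tendsto_exp_neg_atTop_nhds_zero.comp (tendsto_id.const_mul_atTop hκ))
  exact nonpos_iff_eq_zero.mp (ge_of_tendsto' hlim hbound)

end Laplace

lemma okPairs_empty_image_mk {V : Type*} [DecidableEq V] {x : V} {T : Finset V} (hx : x ∉ T) :
    OkPairs ∅ (T.image (Prod.mk x)) := by
  simp only [OkPairs, empty_union, mem_image]
  refine ⟨?_, ?_, disjoint_empty_left _⟩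
  · rintro _ ⟨y, hy, rfl⟩ hxy
    exact hx (by simp only at hxy; rwa [hxy])
  · rintro _ ⟨y, hy, rfl⟩ ⟨z, hz, hzy⟩
    obtain ⟨rfl, rfl⟩ := Prod.mk.inj hzy
    exact hx hy

theorem stmt_7_general {Ω : Type*} [MeasureSpace Ω] [IsProbabilityMeasure (ℙ : Measure Ω)]
    (d : ℕ) (hd : 1 ≤ d) (α lam w : ℝ) (hα : 0 < α) (hαd : α ≤ (d : ℝ))
    (hlam : 0 < lam) (hw : 0 < w)
    (W : (Fin d → ℤ) → Ω → ℝ) (Ed : (Fin d → ℤ) → (Fin d → ℤ) → Ω → Bool)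
    (hWmeas : ∀ x, Measurable (W x))
    (hWnn : ∀ x ω, 0 ≤ W x ω)
    -- conditioning on W₀ = w:
    (hW0 : ∀ ω, W 0 ω = w)
    (hiid : iIndepFun W ℙ)
    (hident : ∀ x y : Fin d → ℤ, x ≠ 0 → y ≠ 0 → IdentDistrib (W x) (W y) ℙ ℙ)
    -- P(W > 0) > 0 and E[W] > 0 (possibly infinite):
    (hWpos : ∀ x : Fin d → ℤ, x ≠ 0 → 0 < ℙ {ω | 0 < W x ω})
    -- conditionally on the weights, edges are independent with
    -- probability p_{xy} = 1 - exp(-λ W_x W_y / |x-y|^α):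
    (h_model : ∀ S T : Finset ((Fin d → ℤ) × (Fin d → ℤ)), OkPairs S T →
      ℙ {ω | (∀ p ∈ S, Ed p.1 p.2 ω = true) ∧ (∀ p ∈ T, Ed p.1 p.2 ω = false)} =
        ∫⁻ ω,
          (∏ p ∈ S, ENNReal.ofReal
            (1 - Real.exp (-(lam * W p.1 ω * W p.2 ω / znorm d (p.1 - p.2) ^ α)))) *
          ∏ p ∈ T, ENNReal.ofReal
            (Real.exp (-(lam * W p.1 ω * W p.2 ω / znorm d (p.1 - p.2) ^ α))) ∂ℙ) :
    -- the degree of the origin is almost surely infinite: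
    ∀ᵐ ω ∂ℙ, {y : Fin d → ℤ | y ≠ 0 ∧ Ed 0 y ω = true}.Infinite := by
  set c : (Fin d → ℤ) → ℝ := fun y => lam * w * (znorm d y ^ α)⁻¹
  have hc_nonneg : 0 ≤ c := fun y => by unfold c znorm; positivity
  have hc_le : ∀ y ≠ 0, c y ≤ lam * w := fun y hy =>
    mul_le_of_le_one_right (by positivity) (inv_le_one_of_one_le₀
      (Real.one_le_rpow (one_le_znorm hy) hα.le))
  have hc_sum : ¬Summable c :=
    (summable_mul_left_iff (by positivity)).not.mpr (not_summable_znorm_rpow_inv hd hαd)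
  have hno_edge (T : Finset (Fin d → ℤ)) (hT : 0 ∉ T) :
      ℙ {ω | ∀ y ∈ T, Ed 0 y ω = false} =
        ∫⁻ ω, ∏ y ∈ T, ENNReal.ofReal (exp (-(c y * W y ω))) ∂ℙ := by
    have := h_model ∅ (T.image (Prod.mk 0)) (okPairs_empty_image_mk hT)
    simp only [notMem_empty, IsEmpty.forall_iff, implies_true, mem_image, forall_exists_index,
      and_imp, forall_apply_eq_imp_iff₂, true_and, prod_empty, Prod.mk.injEq,
      Set.injOn_of_eq_iff_eq, prod_image, hW0, zero_sub, one_mul] at this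
    rw [this]
    refine lintegral_congr fun ω => prod_congr rfl fun y _ => ?_
    simp only [c, znorm_neg]
    ring_nf
  set y₀ : Fin d → ℤ := fun _ => 1
  have hy₀ : y₀ ≠ 0 := Function.ne_iff.mpr ⟨⟨0, hd⟩, one_ne_zero⟩
  refine ae_infinite_setOf_of_forall_finset fun F => ?_
  refine eq_zero_of_le_lintegral_prod_exp_neg (s := {y | y ≠ 0 ∧ y ∉ F}) hiid hWmeas
    (fun y hy => hident y y₀ hy.1 hy₀) (hWmeas y₀) (hWnn y₀) (hWpos y₀ hy₀)
    (fun y hy => ⟨hc_nonneg y, hc_le y hy.1⟩) (fun M => ?_) fun T hT => ?_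
  · obtain ⟨T, hTF, hM⟩ := exists_disjoint_le_sum_of_not_summable hc_nonneg hc_sum (insert 0 F) M
    exact ⟨T, fun y hy => not_or.mp fun h => disjoint_left.mp hTF hy (mem_insert.mpr h), hM⟩
  · rw [← hno_edge T fun h0 => (hT h0).1 rfl]
    exact measure_mono fun ω hω y hy => by simpa [(hT hy).1] using hω y (hT hy).2

theorem stmt_7 {Ω : Type*} [MeasureSpace Ω] [IsProbabilityMeasure (ℙ : Measure Ω)]
    (d : ℕ) (hd : 1 ≤ d) (α lam w : ℝ) (hα : 0 < α) (hαd : α ≤ (d : ℝ))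
    (hlam : 0 < lam) (hw : 0 < w)
    (W : (Fin d → ℤ) → Ω → ℝ) (Ed : (Fin d → ℤ) → (Fin d → ℤ) → Ω → Bool)
    (hWmeas : ∀ x, Measurable (W x))
    (hEmeas : ∀ x y, Measurable (Ed x y))
    (hWnn : ∀ x ω, 0 ≤ W x ω)
    -- conditioning on W₀ = w:
    (hW0 : ∀ ω, W 0 ω = w)
    (hiid : iIndepFun W ℙ)
    (hident : ∀ x y : Fin d → ℤ, x ≠ 0 → y ≠ 0 → IdentDistrib (W x) (W y) ℙ ℙ)
    -- P(W > 0) > 0 and E[W] > 0 (possibly infinite):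
    (hWpos : ∀ x : Fin d → ℤ, x ≠ 0 → 0 < ℙ {ω | 0 < W x ω})
    (hEW : ∀ x : Fin d → ℤ, x ≠ 0 → 0 < ∫⁻ ω, ENNReal.ofReal (W x ω) ∂ℙ)
    -- conditionally on the weights, edges are independent with
    -- probability p_{xy} = 1 - exp(-λ W_x W_y / |x-y|^α):
    (h_model : ∀ S T : Finset ((Fin d → ℤ) × (Fin d → ℤ)), OkPairs S T →
      ℙ {ω | (∀ p ∈ S, Ed p.1 p.2 ω = true) ∧ (∀ p ∈ T, Ed p.1 p.2 ω = false)} =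
        ∫⁻ ω,
          (∏ p ∈ S, ENNReal.ofReal
            (1 - Real.exp (-(lam * W p.1 ω * W p.2 ω / znorm d (p.1 - p.2) ^ α)))) *
          ∏ p ∈ T, ENNReal.ofReal
            (Real.exp (-(lam * W p.1 ω * W p.2 ω / znorm d (p.1 - p.2) ^ α))) ∂ℙ) :
    -- the degree of the origin is almost surely infinite:
    ∀ᵐ ω ∂ℙ, {y : Fin d → ℤ | y ≠ 0 ∧ Ed 0 y ω = true}.Infinite :=
  stmt_7_general d hd α lam w hα hαd hlam hw W Ed hWmeas hWnn hW0 hiid hident hWpos h_model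
end

section
/- In scale-free percolation on ℤ, suppose E[W] = 1, α > 2, and edges are conditionally independent with p_{xy} = 1 - e^{-λW_xW_y/|x-y|^α}. Let A₀ be the event that no vertex y ≤ 0 is connected by an occupied edge to any vertex z > 0. Then P(A₀) ≥ exp(−λ Σ_{n=1}^∞ n^{-(α-1)}) > 0. -/
/-!
The event `A₀` is the decreasing limit of the events that the finitely many crossing edges of
length at most `N` are vacant. Given the weights, such an event has probability `exp (-X_N)`
with `X_N = ∑ λ W_y W_z / |y - z|^α`, and Jensen's inequality gives
`E exp (-X_N) ≥ exp (-E X_N)`. By independence and `E W = 1`, `E X_N = ∑ λ / |y - z|^α`, and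
since exactly `n` crossing edges have length `n`, this is at most `λ ∑ n^{1-α}`.
-/

open MeasureTheory ProbabilityTheory Real

/-- A finite set of ordered pairs representing distinct (undirected) edges:
no loops and no pair together with its reversal. -/
def OkEdges {V : Type*} [DecidableEq V] (S : Finset (V × V)) : Prop :=
  (∀ p ∈ S, p.1 ≠ p.2) ∧ ∀ p ∈ S, p.swap ∉ S

open Finset

/-- `⟨n, (k, j)⟩` with `k + j = n` encodes the edge `(-k, j + 1)`, of length `n + 1`. -/
def crossingEdges (N : ℕ) : Finset (ℤ × ℤ) :=
  ((range N).sigma antidiagonal).image fun q => (-(q.2.1 : ℤ), (q.2.2 : ℤ) + 1)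

lemma mem_crossingEdges {N : ℕ} {p : ℤ × ℤ} :
    p ∈ crossingEdges N ↔ p.1 ≤ 0 ∧ 0 < p.2 ∧ (p.2 - p.1 : ℤ) ≤ N := by
  obtain ⟨y, z⟩ := p
  simp only [crossingEdges, mem_image, mem_sigma, mem_range, HasAntidiagonal.mem_antidiagonal,
    Sigma.exists, Prod.exists, Prod.mk.injEq]
  constructor
  · rintro ⟨n, k, j, ⟨hn, rfl⟩, rfl, rfl⟩
    omega
  · rintro ⟨hy, hz, hN⟩
    refine ⟨(-y).toNat + (z - 1).toNat, (-y).toNat, (z - 1).toNat, ⟨?_, rfl⟩, ?_, ?_⟩ <;> omega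

lemma crossingEdges_mono : Monotone crossingEdges := fun _ _ hNM _ hp => by
  rw [mem_crossingEdges] at hp ⊢
  exact ⟨hp.1, hp.2.1, hp.2.2.trans (by exact_mod_cast hNM)⟩

lemma okEdges_crossingEdges (N : ℕ) : OkEdges (crossingEdges N) := by
  refine ⟨fun p hp => ?_, fun p hp hswap => ?_⟩ <;>
    simp only [mem_crossingEdges, Prod.fst_swap, Prod.snd_swap] at * <;> omega

lemma forall_crossing_iff (P : ℤ → ℤ → Prop) :
    (∀ y z : ℤ, y ≤ 0 → 0 < z → P y z) ↔ ∀ N, ∀ p ∈ crossingEdges N, P p.1 p.2 := by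
  refine ⟨fun h N p hp => ?_, fun h y z hy hz => ?_⟩
  · obtain ⟨hy, hz, -⟩ := mem_crossingEdges.mp hp
    exact h _ _ hy hz
  · exact h (z - y).toNat (y, z) (mem_crossingEdges.mpr ⟨hy, hz, by omega⟩)

lemma sum_crossingEdges {M : Type*} [AddCommMonoid M] (N : ℕ) (g : ℤ → M) :
    ∑ p ∈ crossingEdges N, g (p.2 - p.1) = ∑ n ∈ range N, (n + 1) • g (n + 1) := by
  rw [crossingEdges, sum_image, sum_sigma]
  · refine sum_congr rfl fun n _ => ?_
    rw [sum_congr rfl fun q hq => ?_, sum_const, Nat.card_antidiagonal]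
    rw [HasAntidiagonal.mem_antidiagonal] at hq
    dsimp only
    congr 1
    omega
  · rintro ⟨n, k, j⟩ hn ⟨n', k', j'⟩ hn' h
    simp only [coe_sigma, Set.mem_sigma_iff, coe_range, Set.mem_Iio, mem_coe,
      HasAntidiagonal.mem_antidiagonal, Prod.mk.injEq, neg_inj, Nat.cast_inj, add_left_inj]
      at hn hn' h
    obtain ⟨rfl, rfl⟩ := h
    obtain rfl : n = n' := hn.2.symm.trans hn'.2
    rfl

lemma sum_crossingEdges_rpow_le {α : ℝ} (hα : 2 < α) (N : ℕ) :
    ∑ p ∈ crossingEdges N, 1 / |((p.1 - p.2 : ℤ) : ℝ)| ^ α ≤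
      ∑' n : ℕ, ((n : ℝ) + 1) ^ (-(α - 1)) := by
  have hsum : Summable fun n : ℕ => ((n : ℝ) + 1) ^ (-(α - 1)) := by
    simpa using (summable_nat_add_iff 1).mpr
      (Real.summable_nat_rpow.mpr (by linarith : -(α - 1) < -1))
  calc ∑ p ∈ crossingEdges N, 1 / |((p.1 - p.2 : ℤ) : ℝ)| ^ α
      = ∑ p ∈ crossingEdges N, (fun d : ℤ => 1 / |(d : ℝ)| ^ α) (p.2 - p.1) := by
        refine sum_congr rfl fun p _ => ?_
        rw [← abs_neg]
        push_cast
        ring_nf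
    _ = ∑ n ∈ range N, (n + 1) • (1 / |(((n : ℤ) + 1 : ℤ) : ℝ)| ^ α) :=
        sum_crossingEdges N fun d : ℤ => 1 / |(d : ℝ)| ^ α
    _ = ∑ n ∈ range N, ((n : ℝ) + 1) ^ (-(α - 1)) := by
        refine sum_congr rfl fun n _ => ?_
        have hn : (0 : ℝ) < n + 1 := by positivity
        push_cast
        rw [nsmul_eq_mul, abs_of_pos hn, Real.rpow_neg hn.le, Real.rpow_sub hn, Real.rpow_one]
        push_cast
        field_simp
    _ ≤ ∑' n : ℕ, ((n : ℝ) + 1) ^ (-(α - 1)) :=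
        hsum.sum_le_tsum _ fun n _ => by positivity

section Annealed

variable {Ω : Type*} [MeasurableSpace Ω] {μ : Measure Ω}

lemma ofReal_exp_neg_integral_le_lintegral [IsProbabilityMeasure μ] {X : Ω → ℝ}
    (hX : Integrable X μ) :
    ENNReal.ofReal (exp (-∫ ω, X ω ∂μ)) ≤ ∫⁻ ω, ENNReal.ofReal (exp (-X ω)) ∂μ := by
  have hexp_nonneg : 0 ≤ᵐ[μ] fun ω => exp (-X ω) := ae_of_all _ fun _ => (exp_pos _).le
  by_cases hexp : Integrable (fun ω => exp (-X ω)) μ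
  · rw [← ofReal_integral_eq_lintegral_ofReal hexp hexp_nonneg, ← integral_neg]
    exact ENNReal.ofReal_le_ofReal <| convexOn_exp.map_integral_le continuous_exp.continuousOn
      isClosed_univ (ae_of_all _ fun _ => Set.mem_univ _) hX.neg hexp
  · suffices ∫⁻ ω, ENNReal.ofReal (exp (-X ω)) ∂μ = ⊤ by simp [this]
    by_contra hfin
    exact hexp ⟨continuous_exp.comp_aestronglyMeasurable hX.aestronglyMeasurable.neg,
      (hasFiniteIntegral_iff_ofReal hexp_nonneg).mpr (lt_top_iff_ne_top.mpr hfin)⟩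

variable {V : Type*} {W : V → Ω → ℝ}

lemma integrable_mul_and_integral_mul_eq_one (hind : iIndepFun W μ)
    (hint : ∀ x, Integrable (W x) μ) (hmean : ∀ x, ∫ ω, W x ω ∂μ = 1) {x y : V} (hxy : x ≠ y) :
    Integrable (fun ω => W x ω * W y ω) μ ∧ ∫ ω, W x ω * W y ω ∂μ = 1 := by
  have hind_xy := hind.indepFun hxy
  refine ⟨hind_xy.integrable_mul (hint x) (hint y), ?_⟩
  exact (hind_xy.integral_mul_eq_mul_integral (hint x).1 (hint y).1).trans
    (by rw [hmean, hmean, one_mul])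

lemma ofReal_exp_neg_sum_le_lintegral_prod [IsProbabilityMeasure μ] (hind : iIndepFun W μ)
    (hint : ∀ x, Integrable (W x) μ) (hmean : ∀ x, ∫ ω, W x ω ∂μ = 1) (lam : ℝ) (r : V × V → ℝ)
    {S : Finset (V × V)} (hS : ∀ p ∈ S, p.1 ≠ p.2) :
    ENNReal.ofReal (exp (-∑ p ∈ S, lam / r p)) ≤
      ∫⁻ ω, ∏ p ∈ S, ENNReal.ofReal (exp (-(lam * W p.1 ω * W p.2 ω / r p))) ∂μ := by
  have hterm : ∀ p ∈ S, Integrable (fun ω => lam * W p.1 ω * W p.2 ω / r p) μ ∧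
      ∫ ω, lam * W p.1 ω * W p.2 ω / r p ∂μ = lam / r p := by
    intro p hp
    obtain ⟨hint_p, hmean_p⟩ := integrable_mul_and_integral_mul_eq_one hind hint hmean (hS p hp)
    simp_rw [mul_assoc lam]
    exact ⟨(hint_p.const_mul lam).div_const _, by rw [integral_div, integral_const_mul, hmean_p,
      mul_one]⟩
  calc ENNReal.ofReal (exp (-∑ p ∈ S, lam / r p))
      = ENNReal.ofReal (exp (-∫ ω, ∑ p ∈ S, lam * W p.1 ω * W p.2 ω / r p ∂μ)) := by
        rw [integral_finsetSum _ fun p hp => (hterm p hp).1,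
          sum_congr rfl fun p hp => (hterm p hp).2]
    _ ≤ ∫⁻ ω, ENNReal.ofReal (exp (-∑ p ∈ S, lam * W p.1 ω * W p.2 ω / r p)) ∂μ :=
        ofReal_exp_neg_integral_le_lintegral (integrable_finsetSum _ fun p hp => (hterm p hp).1)
    _ = ∫⁻ ω, ∏ p ∈ S, ENNReal.ofReal (exp (-(lam * W p.1 ω * W p.2 ω / r p))) ∂μ := by
        refine lintegral_congr fun ω => ?_
        rw [← ENNReal.ofReal_prod_of_nonneg fun p _ => (exp_pos _).le, ← exp_sum,
          sum_neg_distrib]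

end Annealed

theorem stmt_15_general {Ω : Type*} [MeasureSpace Ω] [IsProbabilityMeasure (ℙ : Measure Ω)]
    (α lam : ℝ) (hα : 2 < α) (hlam : 0 < lam)
    (W : ℤ → Ω → ℝ) (Ed : ℤ → ℤ → Ω → Bool)
    (hEmeas : ∀ x y, Measurable (Ed x y))
    (hiid : iIndepFun W ℙ)
    (hident : ∀ x y : ℤ, IdentDistrib (W x) (W y) ℙ ℙ)
    -- E[W] = 1:
    (hInt : Integrable (W 0) ℙ) (hmean : ∫ ω, W 0 ω ∂ℙ = 1)
    -- conditionally on the weights the edges are independent with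
    -- vacancy probability exp(-λ W_x W_y/|x-y|^α):
    (h_model : ∀ S : Finset (ℤ × ℤ), OkEdges S →
      ℙ {ω | ∀ p ∈ S, Ed p.1 p.2 ω = false} =
        ∫⁻ ω, ∏ p ∈ S, ENNReal.ofReal
          (Real.exp (-(lam * W p.1 ω * W p.2 ω / |((p.1 - p.2 : ℤ) : ℝ)| ^ α))) ∂ℙ) :
    -- A₀ = {no vertex y ≤ 0 is connected by an occupied edge to any vertex z > 0}:
    ENNReal.ofReal (Real.exp (-lam * ∑' n : ℕ, ((n : ℝ) + 1) ^ (-(α - 1)))) ≤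
        ℙ {ω | ∀ y z : ℤ, y ≤ 0 → 0 < z → Ed y z ω = false} ∧
      0 < ℙ {ω | ∀ y z : ℤ, y ≤ 0 → 0 < z → Ed y z ω = false} := by
  set c := ENNReal.ofReal (exp (-lam * ∑' n : ℕ, ((n : ℝ) + 1) ^ (-(α - 1))))
  set E : ℕ → Set Ω := fun N => {ω | ∀ p ∈ crossingEdges N, Ed p.1 p.2 ω = false}
  have hE_le : ∀ N, c ≤ ℙ (E N) := by
    intro N
    rw [h_model _ (okEdges_crossingEdges N)]
    refine le_trans ?_ (ofReal_exp_neg_sum_le_lintegral_prod hiid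
      (fun x => (hident x 0).integrable_iff.mpr hInt)
      (fun x => (hident x 0).integral_eq.trans hmean) lam _ (okEdges_crossingEdges N).1)
    refine ENNReal.ofReal_le_ofReal (exp_le_exp.mpr ?_)
    simp_rw [div_eq_mul_one_div lam, ← mul_sum, neg_mul, neg_le_neg_iff]
    exact mul_le_mul_of_nonneg_left (sum_crossingEdges_rpow_le hα N) hlam.le
  have hA : {ω | ∀ y z : ℤ, y ≤ 0 → 0 < z → Ed y z ω = false} = ⋂ N, E N := by
    ext ω
    simpa only [E, Set.mem_ofPred_eq, Set.mem_iInter] using forall_crossing_iff _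
  have hE_meas : ∀ N, MeasurableSet (E N) := fun N => by
    simp only [E, Set.ofPred_forall]
    exact .iInter fun p => .iInter fun _ => hEmeas p.1 p.2 (measurableSet_singleton false)
  have hE_anti : Antitone E := fun _ _ hNM _ hω p hp => hω p (crossingEdges_mono hNM hp)
  have hbound : c ≤ ℙ {ω | ∀ y z : ℤ, y ≤ 0 → 0 < z → Ed y z ω = false} := by
    rw [hA, hE_anti.measure_iInter (fun N => (hE_meas N).nullMeasurableSet)
      ⟨0, measure_ne_top _ _⟩]
    exact le_iInf hE_le
  exact ⟨hbound, (ENNReal.ofReal_pos.mpr (exp_pos _)).trans_le hbound⟩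

theorem stmt_15 {Ω : Type*} [MeasureSpace Ω] [IsProbabilityMeasure (ℙ : Measure Ω)]
    (α lam : ℝ) (hα : 2 < α) (hlam : 0 < lam)
    (W : ℤ → Ω → ℝ) (Ed : ℤ → ℤ → Ω → Bool)
    (hWmeas : ∀ x, Measurable (W x))
    (hEmeas : ∀ x y, Measurable (Ed x y))
    (hWnn : ∀ x ω, 0 ≤ W x ω)
    (hiid : iIndepFun W ℙ)
    (hident : ∀ x y : ℤ, IdentDistrib (W x) (W y) ℙ ℙ)
    -- E[W] = 1:
    (hInt : Integrable (W 0) ℙ) (hmean : ∫ ω, W 0 ω ∂ℙ = 1)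
    (hsymm : ∀ x y ω, Ed x y ω = Ed y x ω)
    -- conditionally on the weights the edges are independent with
    -- vacancy probability exp(-λ W_x W_y/|x-y|^α):
    (h_model : ∀ S : Finset (ℤ × ℤ), OkEdges S →
      ℙ {ω | ∀ p ∈ S, Ed p.1 p.2 ω = false} =
        ∫⁻ ω, ∏ p ∈ S, ENNReal.ofReal
          (Real.exp (-(lam * W p.1 ω * W p.2 ω / |((p.1 - p.2 : ℤ) : ℝ)| ^ α))) ∂ℙ) :
    -- A₀ = {no vertex y ≤ 0 is connected by an occupied edge to any vertex z > 0}: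
    ENNReal.ofReal (Real.exp (-lam * ∑' n : ℕ, ((n : ℝ) + 1) ^ (-(α - 1)))) ≤
        ℙ {ω | ∀ y z : ℤ, y ≤ 0 → 0 < z → Ed y z ω = false} ∧
      0 < ℙ {ω | ∀ y z : ℤ, y ≤ 0 → 0 < z → Ed y z ω = false} :=
  stmt_15_general α lam hα hlam W Ed hEmeas hiid hident hInt hmean h_model
end
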